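/- arXiv:0810.0706 — 5 statements merged into one kernel-verified Lean document; each statement's English description precedes it below -/
import Mathlib

section
/- Let a_n = 2^(2n+2) and b_n = 2^(2n). Then the series ∑_{n=1}^∞ b_n / (a_1 ⋯ a_n) converges, and the real number x = ∑_{n=1}^∞ b_n / (a_1 ⋯ a_n) satisfies ∑_{n=1}^∞ (a_n/b_n) · ‖a_1 ⋯ a_{n-1} · x‖ = ∞, where ‖y‖ denotes the distance from y to the nearest integer. -/
/-- Distance from a real number to the nearest integer. -/
noncomputable def distToInt (y : ℝ) : ℝ := |y - round y|

/-! With `e k = k ^ 2 + 3 * k + 2` one has `a 1 ⋯ a n = 2 ^ (e n - 2)` and `x = ∑ 2 ^ (-e k)`.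
Multiplying `x` by `2 ^ (e n - 2)` turns the terms before `n` into integers and term `n` into
`1 / 4`, while the gaps `e (k + 1) - e k ≥ 4` keep the tail below `1 / 8`. Hence
`‖a 1 ⋯ a n x‖ ≥ 1 / 4`, and since `a (n + 1) / b (n + 1) = 4` the terms never go below `1`.
-/

open Finset

lemma quarter_le_distToInt_intCast_add (K : ℤ) {s : ℝ}
    (hs : s ∈ Set.Icc (1 / 4 : ℝ) (3 / 4)) :
    1 / 4 ≤ distToInt (K + s) := by
  obtain ⟨hs₁, hs₂⟩ := hs
  rw [distToInt]
  rcases le_or_gt (round ((K : ℝ) + s)) K with h | h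
  · have : (round ((K : ℝ) + s) : ℝ) ≤ K := by exact_mod_cast h
    exact le_abs.mpr (Or.inl (by linarith))
  · have : (K : ℝ) + 1 ≤ round ((K : ℝ) + s) := by exact_mod_cast h
    exact le_abs.mpr (Or.inr (by linarith))

section Lacunary

variable {e : ℕ → ℕ}

lemma summable_inv_two_pow_of_strictMono (he : StrictMono e) :
    Summable fun k => ((2 : ℝ) ^ e k)⁻¹ := by
  refine summable_geometric_two.of_nonneg_of_le (fun k => by positivity) fun k => ?_
  rw [one_div, inv_pow]
  exact inv_anti₀ (by positivity) (pow_le_pow_right₀ one_le_two (he.id_le k))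

lemma tsum_inv_two_pow_nat_add_le (he : StrictMono e) (m : ℕ) :
    ∑' k, ((2 : ℝ) ^ e (k + m))⁻¹ ≤ 2 * ((2 : ℝ) ^ e m)⁻¹ := by
  have hle : ∀ k, ((2 : ℝ) ^ e (k + m))⁻¹ ≤ ((2 : ℝ) ^ e m)⁻¹ * (1 / 2) ^ k := by
    intro k
    rw [one_div, inv_pow, ← mul_inv, ← pow_add]
    exact inv_anti₀ (by positivity)
      (pow_le_pow_right₀ one_le_two (by linarith [he.add_le_nat k m]))
  calc ∑' k, ((2 : ℝ) ^ e (k + m))⁻¹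
      ≤ ∑' k, ((2 : ℝ) ^ e m)⁻¹ * (1 / 2) ^ k :=
        ((summable_inv_two_pow_of_strictMono he).comp_injective
          (add_left_injective m)).tsum_le_tsum hle (summable_geometric_two.mul_left _)
    _ = 2 * ((2 : ℝ) ^ e m)⁻¹ := by rw [tsum_mul_left, tsum_geometric_two, mul_comm]

lemma quarter_le_distToInt_two_pow_mul_tsum (hgap : ∀ k, e k + 2 ≤ e (k + 1)) {n N : ℕ}
    (hn : e n = N + 2) : 1 / 4 ≤ distToInt (2 ^ N * ∑' k, ((2 : ℝ) ^ e k)⁻¹) := by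
  have he : StrictMono e := strictMono_nat_of_lt_succ fun k => by linarith [hgap k]
  set tail := ∑' k, ((2 : ℝ) ^ e (k + (n + 1)))⁻¹
  have hsplit : ∑' k, ((2 : ℝ) ^ e k)⁻¹
      = ∑ k ∈ range n, ((2 : ℝ) ^ e k)⁻¹ + ((2 : ℝ) ^ e n)⁻¹ + tail := by
    rw [← sum_range_succ, (summable_inv_two_pow_of_strictMono he).sum_add_tsum_nat_add]
  have hhead : 2 ^ N * ∑ k ∈ range n, ((2 : ℝ) ^ e k)⁻¹
      = ((∑ k ∈ range n, 2 ^ (N - e k) : ℕ) : ℤ) := by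
    push_cast
    rw [mul_sum]
    refine sum_congr rfl fun k hk => ?_
    have : e k + 2 ≤ e n := (hgap k).trans (he.monotone (mem_range.mp hk))
    rw [pow_sub₀ _ two_ne_zero (by omega)]
  have hterm : 2 ^ N * ((2 : ℝ) ^ e n)⁻¹ = 1 / 4 := by
    rw [hn, pow_add]; field_simp; norm_num
  have htail : 2 ^ N * tail ≤ 1 / 8 := by
    have hpow : (2 : ℝ) ^ (N + 4) ≤ 2 ^ e (n + 1) :=
      pow_le_pow_right₀ one_le_two (by linarith [hgap n])
    calc 2 ^ N * tail ≤ 2 ^ N * (2 * ((2 : ℝ) ^ (N + 4))⁻¹) := by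
          gcongr
          exact (tsum_inv_two_pow_nat_add_le he (n + 1)).trans (by gcongr)
      _ = 1 / 8 := by rw [pow_add]; field_simp; norm_num
  have htail₀ : 0 ≤ 2 ^ N * tail :=
    mul_nonneg (by positivity) (tsum_nonneg fun k => by positivity)
  rw [hsplit, mul_add, mul_add, hhead, hterm, add_assoc]
  exact quarter_le_distToInt_intCast_add _ ⟨by linarith, by linarith⟩

end Lacunary

lemma prod_Icc_two_pow (n : ℕ) :
    ∏ i ∈ Icc 1 n, (2 : ℝ) ^ (2 * i + 2) = 2 ^ (n ^ 2 + 3 * n) := by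
  induction n with
  | zero => simp
  | succ n ih =>
    rw [prod_Icc_succ_top (Nat.le_add_left 1 n), ih, ← pow_add]
    ring_nf

/-- For `a n = 2^(2n+2)` and `b n = 2^(2n)`, the series `∑ b n / (a 1 ⋯ a n)` converges,
and its sum `x` satisfies `∑ (a n / b n) * ‖a 1 ⋯ a (n-1) * x‖ = ∞`. -/
theorem stmt_0 (a b : ℕ → ℝ)
    (ha : ∀ n, a n = 2 ^ (2 * n + 2)) (hb : ∀ n, b n = 2 ^ (2 * n)) :
    (Summable fun n : ℕ => b (n + 1) / ∏ i ∈ Finset.Icc 1 (n + 1), a i) ∧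
    ∀ x : ℝ, x = (∑' n : ℕ, b (n + 1) / ∏ i ∈ Finset.Icc 1 (n + 1), a i) →
      ¬ Summable (fun n : ℕ =>
        (a (n + 1) / b (n + 1)) * distToInt ((∏ i ∈ Finset.Icc 1 n, a i) * x)) := by
  have hgap : ∀ k, (k ^ 2 + 3 * k + 2) + 2 ≤ (k + 1) ^ 2 + 3 * (k + 1) + 2 := fun k => by
    nlinarith
  have hterm : ∀ n : ℕ, b (n + 1) / ∏ i ∈ Icc 1 (n + 1), a i
      = ((2 : ℝ) ^ (n ^ 2 + 3 * n + 2))⁻¹ := fun n => by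
    rw [hb, prod_congr rfl fun i _ => ha i, prod_Icc_two_pow,
      show (n + 1) ^ 2 + 3 * (n + 1) = (n ^ 2 + 3 * n + 2) + 2 * (n + 1) by ring,
      pow_add, div_mul_cancel_right₀ (by positivity)]
  have hratio : ∀ n : ℕ, a (n + 1) / b (n + 1) = 4 := fun n => by
    rw [ha, hb, pow_add]; field_simp; norm_num
  have hprod : ∀ n, ∏ i ∈ Icc 1 n, a i = 2 ^ (n ^ 2 + 3 * n) := fun n => by
    rw [prod_congr rfl fun i _ => ha i, prod_Icc_two_pow]
  simp only [hterm]
  simp only [hratio, hprod]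
  refine ⟨summable_inv_two_pow_of_strictMono (strictMono_nat_of_lt_succ fun k => by
    linarith [hgap k]), ?_⟩
  rintro x rfl hS
  obtain ⟨n, hn⟩ := (hS.tendsto_atTop_zero.eventually_lt_const one_pos).exists
  linarith [quarter_le_distToInt_two_pow_mul_tsum (e := fun k => k ^ 2 + 3 * k + 2) hgap
    (n := n) rfl]
end

section
/- Let a_n = 2^(2n+2), b_n = 2^(2n), a'_n = 2^(2n+1), b'_n = 2^(2n-1). Define H = { x ∈ ℝ : ∑_{n≥1} (a_n/b_n)·‖a_1⋯a_{n-1} x‖ < ∞ } and H' = { x ∈ ℝ : ∑_{n≥1} (a'_n/b'_n)·‖a'_1⋯a'_{n-1} x‖ < ∞ }, where ‖y‖ = dist(y, ℤ). Then every real number x can be written as x = y + z with y ∈ H and z ∈ H'. -/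
/-- The subgroup `H = { x : ∑ (a n / b n) * ‖a 1 ⋯ a (n-1) * x‖ < ∞ }` associated to
sequences `a b : ℕ → ℝ` (indexed from 1). -/
def Hgroup (a b : ℕ → ℝ) : Set ℝ :=
  {x : ℝ | Summable fun n : ℕ =>
    (a (n + 1) / b (n + 1)) * distToInt ((∏ i ∈ Finset.Icc 1 n, a i) * x)}

open Finset

lemma distToInt_intCast_add (k : ℤ) (t : ℝ) : distToInt (k + t) = distToInt t := by
  rw [distToInt, distToInt, round_intCast_add]
  push_cast
  ring_nf

lemma distToInt_le_abs (t : ℝ) : distToInt t ≤ |t| := by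
  simpa [distToInt] using round_le t 0

/-- `dyadicStep x k` is the `(k+1)`-st binary digit of `x` times its weight `2⁻¹ ^ (k+1)`. -/
noncomputable def dyadicStep (x : ℝ) (k : ℕ) : ℝ :=
  ⌊2 ^ (k + 1) * x⌋ / 2 ^ (k + 1) - ⌊2 ^ k * x⌋ / 2 ^ k

lemma two_mul_floor_le_floor_two_mul (t : ℝ) : 2 * ⌊t⌋ ≤ ⌊2 * t⌋ :=
  Int.le_floor.mpr (by push_cast; linarith [Int.floor_le t])

lemma floor_two_mul_le (t : ℝ) : ⌊2 * t⌋ ≤ 2 * ⌊t⌋ + 1 := by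
  have : ⌊2 * t⌋ < 2 * ⌊t⌋ + 2 :=
    Int.floor_lt.mpr (by push_cast; linarith [Int.lt_floor_add_one t])
  omega

lemma dyadicStep_eq (x : ℝ) (k : ℕ) :
    dyadicStep x k = (⌊2 * (2 ^ k * x)⌋ - 2 * ⌊2 ^ k * x⌋ : ℤ) / 2 ^ (k + 1) := by
  rw [dyadicStep, pow_succ', mul_assoc]
  push_cast
  field_simp

lemma dyadicStep_nonneg (x : ℝ) (k : ℕ) : 0 ≤ dyadicStep x k := by
  rw [dyadicStep_eq]
  have := two_mul_floor_le_floor_two_mul (2 ^ k * x)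
  exact div_nonneg (Int.cast_nonneg (by omega)) (by positivity)

lemma dyadicStep_le (x : ℝ) (k : ℕ) : dyadicStep x k ≤ 2⁻¹ ^ (k + 1) := by
  rw [dyadicStep_eq, inv_pow, ← one_div]
  have := floor_two_mul_le (2 ^ k * x)
  gcongr
  exact (Int.cast_le.mpr (by omega)).trans_eq Int.cast_one

lemma two_pow_mul_dyadicStep_eq_floor (x : ℝ) {k m : ℕ} (hkm : k < m) :
    2 ^ m * dyadicStep x k = ⌊2 ^ m * dyadicStep x k⌋ := by
  obtain ⟨j, rfl⟩ := Nat.exists_eq_add_of_lt hkm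
  rw [dyadicStep_eq, show k + j + 1 = j + (k + 1) by ring, pow_add, mul_assoc,
    mul_div_cancel₀ _ (by positivity)]
  exact_mod_cast (Int.floor_intCast _).symm

lemma tendsto_floor_two_pow_mul_div (x : ℝ) :
    Filter.Tendsto (fun n : ℕ => (⌊2 ^ n * x⌋ : ℝ) / 2 ^ n) Filter.atTop (nhds x) := by
  have hlow : Filter.Tendsto (fun n : ℕ => x - 2⁻¹ ^ n) Filter.atTop (nhds x) := by
    simpa using (tendsto_pow_atTop_nhds_zero_of_lt_one (by norm_num : (0 : ℝ) ≤ 2⁻¹)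
      (by norm_num)).const_sub x
  refine tendsto_of_tendsto_of_tendsto_of_le_of_le hlow tendsto_const_nhds (fun n => ?_)
    (fun n => ?_)
  · rw [le_div_iff₀ (by positivity), sub_mul, inv_pow, inv_mul_cancel₀ (by positivity)]
    linarith [Int.lt_floor_add_one (2 ^ n * x), mul_comm x (2 ^ n)]
  · rw [div_le_iff₀ (by positivity), mul_comm]
    exact Int.floor_le _

lemma hasSum_dyadicStep (x : ℝ) : HasSum (dyadicStep x) (x - ⌊x⌋) := by
  rw [hasSum_iff_tendsto_nat_of_nonneg (dyadicStep_nonneg x)]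
  simp only [dyadicStep, sum_range_sub (fun k => (⌊2 ^ k * x⌋ : ℝ) / 2 ^ k), pow_zero, one_mul,
    div_one]
  exact (tendsto_floor_two_pow_mul_div x).sub_const _

lemma floor_add_tsum_indicator_compl_add_tsum_indicator (x : ℝ) (S : Set ℕ) :
    ⌊x⌋ + ∑' k, Sᶜ.indicator (dyadicStep x) k + ∑' k, S.indicator (dyadicStep x) k = x := by
  have hx := hasSum_dyadicStep x
  rw [add_assoc, ← (hx.summable.indicator _).tsum_add (hx.summable.indicator _),
    funext fun k => Set.indicator_compl_add_self_apply .., hx.tsum_eq]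
  ring

lemma distToInt_two_pow_mul_tsum_le {f : ℕ → ℝ} {m n : ℕ} (hf_nonneg : ∀ k, 0 ≤ f k)
    (hf_le : ∀ k, f k ≤ 2⁻¹ ^ (k + 1)) (hf_int : ∀ k < m, 2 ^ m * f k = ⌊2 ^ m * f k⌋)
    (hf_gap : ∀ k, m ≤ k → k < m + n → f k = 0) :
    distToInt (2 ^ m * ∑' k, f k) ≤ 2⁻¹ ^ n := by
  have hgeom : Summable fun k : ℕ => (2⁻¹ : ℝ) ^ k :=
    summable_geometric_of_lt_one (by norm_num) (by norm_num)
  have hsum : Summable f := .of_nonneg_of_le hf_nonneg hf_le ((summable_nat_add_iff 1).mpr hgeom)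
  have hhead : 2 ^ m * ∑ k ∈ range m, f k = ((∑ k ∈ range m, ⌊2 ^ m * f k⌋ : ℤ) : ℝ) := by
    push_cast
    rw [mul_sum]
    exact sum_congr rfl fun k hk => hf_int k (mem_range.mp hk)
  have hgap_sum : ∑ k ∈ range n, f (m + k) = 0 :=
    sum_eq_zero fun k hk => hf_gap _ (by omega) (by simp at hk; omega)
  have htail : ∑' k, f (k + (m + n)) ≤ 2⁻¹ ^ (m + n) := by
    calc ∑' k, f (k + (m + n)) ≤ ∑' k, 2⁻¹ ^ (m + n + 1) * (2⁻¹ : ℝ) ^ k :=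
          ((summable_nat_add_iff _).mpr hsum).tsum_le_tsum
            (fun k => (hf_le _).trans_eq (by ring)) (hgeom.mul_left _)
      _ = 2⁻¹ ^ (m + n) := by rw [tsum_mul_left, tsum_geometric_inv_two]; ring
  rw [← hsum.sum_add_tsum_nat_add (m + n), sum_range_add, hgap_sum, add_zero, mul_add, hhead,
    distToInt_intCast_add]
  refine (distToInt_le_abs _).trans ?_
  rw [abs_of_nonneg (mul_nonneg (by positivity) (tsum_nonneg fun k => hf_nonneg _))]
  calc 2 ^ m * ∑' k, f (k + (m + n)) ≤ 2 ^ m * 2⁻¹ ^ (m + n) := by gcongr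
    _ = 2⁻¹ ^ n := by rw [pow_add, ← mul_assoc, ← mul_pow]; norm_num

lemma distToInt_two_pow_mul_tsum_indicator_le (x : ℝ) {S : Set ℕ} {m n : ℕ}
    (hS : ∀ k, m ≤ k → k < m + n → k ∉ S) :
    distToInt (2 ^ m * ∑' k, S.indicator (dyadicStep x) k) ≤ 2⁻¹ ^ n := by
  refine distToInt_two_pow_mul_tsum_le (fun k => ?_) (fun k => ?_) (fun k hk => ?_)
    (fun k hk₁ hk₂ => Set.indicator_of_notMem (hS k hk₁ hk₂) _)
  · exact Set.indicator_nonneg (fun k _ => dyadicStep_nonneg x k) k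
  · exact (Set.indicator_le_self' (fun k _ => dyadicStep_nonneg x k) k).trans (dyadicStep_le x k)
  · by_cases hkS : k ∈ S
    · rw [Set.indicator_of_mem hkS, two_pow_mul_dyadicStep_eq_floor x hk, Int.floor_intCast]
    · simp [Set.indicator_of_notMem hkS]

lemma distToInt_two_pow_mul_intCast_add (m : ℕ) (k : ℤ) (t : ℝ) :
    distToInt (2 ^ m * (k + t)) = distToInt (2 ^ m * t) := by
  rw [mul_add, show (2 : ℝ) ^ m * k = ((2 ^ m * k : ℤ) : ℝ) by push_cast; rfl,
    distToInt_intCast_add]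

def digitBlocks : Set ℕ := {k | ∃ n, n ^ 2 + 3 * n ≤ k ∧ k < n ^ 2 + 4 * n}

lemma notMem_digitBlocks {n k : ℕ} (h₁ : n ^ 2 + 2 * n ≤ k) (h₂ : k < n ^ 2 + 3 * n) :
    k ∉ digitBlocks := by
  rintro ⟨j, hj₁, hj₂⟩
  rcases le_or_gt n j with h | h
  · nlinarith
  · have : (j + 1) ^ 2 + 2 * (j + 1) ≤ n ^ 2 + 2 * n := by nlinarith
    nlinarith

lemma mem_Hgroup_iff_of_ratio_eq {a b p : ℕ → ℝ} {c : ℝ} (hc : c ≠ 0)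
    (hratio : ∀ n, a (n + 1) / b (n + 1) = c) (hprod : ∀ n, ∏ i ∈ Icc 1 n, a i = p n) (x : ℝ) :
    x ∈ Hgroup a b ↔ Summable fun n => distToInt (p n * x) := by
  simp only [Hgroup, Set.mem_ofPred_eq, hratio, hprod]
  exact summable_mul_left_iff hc

lemma summable_distToInt_of_le {u : ℕ → ℝ} (h : ∀ n, distToInt (u n) ≤ 2⁻¹ ^ n) :
    Summable fun n => distToInt (u n) :=
  .of_nonneg_of_le (fun n => abs_nonneg _) h
    (summable_geometric_of_lt_one (by norm_num) (by norm_num))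

lemma prod_Icc_two_pow_two_mul_add (c n : ℕ) :
    ∏ i ∈ Icc 1 n, (2 : ℝ) ^ (2 * i + c) = 2 ^ (n ^ 2 + (c + 1) * n) := by
  induction n with
  | zero => simp
  | succ n ih => rw [prod_Icc_succ_top (by omega), ih, ← pow_add]; ring_nf

/-- For `a n = 2^(2n+2)`, `b n = 2^(2n)`, `a' n = 2^(2n+1)`, `b' n = 2^(2n-1)`,
every real `x` can be written as `x = y + z` with `y ∈ H` and `z ∈ H'`. -/
theorem stmt_1 (a b a' b' : ℕ → ℝ)
    (ha : ∀ n, a n = 2 ^ (2 * n + 2)) (hb : ∀ n, b n = 2 ^ (2 * n))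
    (ha' : ∀ n, a' n = 2 ^ (2 * n + 1)) (hb' : ∀ n, 1 ≤ n → b' n = 2 ^ (2 * n - 1)) :
    ∀ x : ℝ, ∃ y z : ℝ, y ∈ Hgroup a b ∧ z ∈ Hgroup a' b' ∧ x = y + z := by
  intro x
  refine ⟨⌊x⌋ + ∑' k, digitBlocksᶜ.indicator (dyadicStep x) k,
    ∑' k, digitBlocks.indicator (dyadicStep x) k, ?_, ?_,
    (floor_add_tsum_indicator_compl_add_tsum_indicator x digitBlocks).symm⟩
  · have hratio (n : ℕ) : a (n + 1) / b (n + 1) = 4 := by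
      rw [ha, hb, pow_add, mul_div_cancel_left₀ _ (by positivity)]; norm_num
    have hprod (n : ℕ) : ∏ i ∈ Icc 1 n, a i = 2 ^ (n ^ 2 + 3 * n) := by
      rw [prod_congr rfl fun i _ => ha i, prod_Icc_two_pow_two_mul_add]
    rw [mem_Hgroup_iff_of_ratio_eq four_ne_zero hratio hprod]
    refine summable_distToInt_of_le fun n => ?_
    rw [distToInt_two_pow_mul_intCast_add]
    exact distToInt_two_pow_mul_tsum_indicator_le x fun k h₁ h₂ hk => hk ⟨n, h₁, by linarith⟩
  · have hratio (n : ℕ) : a' (n + 1) / b' (n + 1) = 4 := by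
      rw [ha', hb' _ n.succ_pos, show 2 * (n + 1) + 1 = 2 * (n + 1) - 1 + 2 by omega, pow_add,
        mul_div_cancel_left₀ _ (by positivity)]; norm_num
    have hprod (n : ℕ) : ∏ i ∈ Icc 1 n, a' i = 2 ^ (n ^ 2 + 2 * n) := by
      rw [prod_congr rfl fun i _ => ha' i, prod_Icc_two_pow_two_mul_add]
    rw [mem_Hgroup_iff_of_ratio_eq four_ne_zero hratio hprod]
    exact summable_distToInt_of_le fun n =>
      distToInt_two_pow_mul_tsum_indicator_le x fun k h₁ h₂ => notMem_digitBlocks h₁ (by linarith)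
end

section
/- Let H_1 and H_2 be additive subgroups of ℝ, each equipped with a Polish group topology making the inclusion H_i ↪ ℝ continuous, and suppose H_1 ≠ ℝ and H_2 ≠ ℝ (as sets). Then the surjective continuous homomorphism H_1 × H_2 → ℝ, (x,y) ↦ x + y (assuming H_1 + H_2 = ℝ) admits no continuous group-homomorphism splitting ℝ → H_1 × H_2. -/
/-!
A continuous splitting `s` would give continuous additive maps `θᵢ = ιᵢ ∘ prᵢ ∘ s : ℝ → ℝ` with
`θ₁ + θ₂ = id`. A continuous additive endomorphism of `ℝ` is `ℝ`-linear, hence zero or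
surjective; as the range of `θᵢ` lies in the proper subgroup `range ιᵢ`, both vanish.
-/

theorem AddMonoidHom.eq_zero_of_continuous_of_range_ne_univ (θ : ℝ →+ ℝ) (hθ : Continuous θ)
    (hrange : Set.range θ ≠ Set.univ) : θ = 0 := by
  obtain hsurj | hzero := (θ.toRealLinearMap hθ : ℝ →ₗ[ℝ] ℝ).surjective_or_eq_zero
  · exact absurd (Set.range_eq_univ.mpr hsurj) hrange
  · ext x
    exact LinearMap.congr_fun hzero x

theorem AddMonoidHom.comp_eq_zero_of_range_ne_univ {T : Type*} [TopologicalSpace T]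
    [AddZeroClass T] (ι : T →+ ℝ) (hι : Continuous ι) (hrange : Set.range ι ≠ Set.univ)
    (f : ℝ →+ T) (hf : Continuous f) : ι.comp f = 0 :=
  (ι.comp f).eq_zero_of_continuous_of_range_ne_univ (hι.comp hf) fun huniv =>
    hrange <| Set.eq_univ_of_univ_subset <| huniv ▸ Set.range_comp_subset_range f ι

theorem stmt_2_general {T₁ T₂ : Type*}
    [TopologicalSpace T₁] [AddGroup T₁]
    [TopologicalSpace T₂] [AddGroup T₂]
    (ι₁ : T₁ →+ ℝ) (ι₂ : T₂ →+ ℝ)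
    (hc₁ : Continuous ι₁) (hc₂ : Continuous ι₂)
    (h₁ : Set.range ι₁ ≠ Set.univ) (h₂ : Set.range ι₂ ≠ Set.univ) :
    ¬ ∃ s : ℝ →+ T₁ × T₂, Continuous s ∧ ∀ x : ℝ, ι₁ (s x).1 + ι₂ (s x).2 = x := by
  rintro ⟨s, hs, hsplit⟩
  have hθ₁ := ι₁.comp_eq_zero_of_range_ne_univ hc₁ h₁
    ((AddMonoidHom.fst T₁ T₂).comp s) (continuous_fst.comp hs)
  have hθ₂ := ι₂.comp_eq_zero_of_range_ne_univ hc₂ h₂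
    ((AddMonoidHom.snd T₁ T₂).comp s) (continuous_snd.comp hs)
  have hone := hsplit 1
  rw [show ι₁ (s 1).1 = 0 from DFunLike.congr_fun hθ₁ 1,
    show ι₂ (s 1).2 = 0 from DFunLike.congr_fun hθ₂ 1] at hone
  norm_num at hone

/-- Let `H₁, H₂` be additive subgroups of `ℝ`, each carrying a Polish group topology making
the inclusion into `ℝ` continuous, with `H₁ ≠ ℝ ≠ H₂` and `H₁ + H₂ = ℝ`.  Then the surjective
continuous homomorphism `H₁ × H₂ → ℝ, (x,y) ↦ x + y` admits no continuous homomorphic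
splitting `ℝ → H₁ × H₂`.  The subgroups `Hᵢ` are modelled as Polish topological additive
groups `T₁, T₂` together with continuous injective additive embeddings `ι₁, ι₂` into `ℝ`. -/
theorem stmt_2 {T₁ T₂ : Type*}
    [TopologicalSpace T₁] [AddGroup T₁] [IsTopologicalAddGroup T₁] [PolishSpace T₁]
    [TopologicalSpace T₂] [AddGroup T₂] [IsTopologicalAddGroup T₂] [PolishSpace T₂]
    (ι₁ : T₁ →+ ℝ) (ι₂ : T₂ →+ ℝ)
    (hc₁ : Continuous ι₁) (hc₂ : Continuous ι₂)
    (hi₁ : Function.Injective ι₁) (hi₂ : Function.Injective ι₂)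
    (h₁ : Set.range ι₁ ≠ Set.univ) (h₂ : Set.range ι₂ ≠ Set.univ)
    (hsum : ∀ x : ℝ, ∃ y z, ι₁ y + ι₂ z = x) :
    ¬ ∃ s : ℝ →+ T₁ × T₂, Continuous s ∧ ∀ x : ℝ, ι₁ (s x).1 + ι₂ (s x).2 = x :=
  stmt_2_general ι₁ ι₂ hc₁ hc₂ h₁ h₂
end

section
/- Let R be the subring of ℚ generated by the inverses of a set P of prime numbers. If A ∈ GL(n,ℚ) and there exists α ∈ ℕ \ {0} with α ∈ R^× such that α ℤ^n ⊆ ℤ^n ∩ A ℤ^n ∩ A^{-1} ℤ^n, then A ∈ GL(n,R), i.e., all entries of A and of A^{-1} lie in R. -/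
lemma stmt_6_aux (n : ℕ) (R : Subring ℚ) (α : ℕ) (hα : α ≠ 0)
    (hαinv : ((α : ℚ))⁻¹ ∈ R) (M : GL (Fin n) ℚ)
    (h : ∀ v : Fin n → ℤ, ∃ w : Fin n → ℤ,
      (M : Matrix (Fin n) (Fin n) ℚ).mulVec (fun i => (w i : ℚ))
        = fun i => (α : ℚ) * (v i : ℚ)) :
    ∀ i j, ((M⁻¹ : GL (Fin n) ℚ) : Matrix (Fin n) (Fin n) ℚ) i j ∈ R := by
  intro i j
  obtain ⟨w, hw⟩ := h (Pi.single j 1)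
  have hinv : ((M⁻¹ : GL (Fin n) ℚ) : Matrix (Fin n) (Fin n) ℚ).mulVec
      ((M : Matrix (Fin n) (Fin n) ℚ).mulVec (fun i => (w i : ℚ)))
      = fun i => (w i : ℚ) := by
    rw [Matrix.mulVec_mulVec]
    have : ((M⁻¹ : GL (Fin n) ℚ) : Matrix (Fin n) (Fin n) ℚ) *
        (M : Matrix (Fin n) (Fin n) ℚ) = 1 := by
      rw [← Units.val_mul, inv_mul_cancel, Units.val_one]
    rw [this, Matrix.one_mulVec]
  rw [hw] at hinv
  have hval : (α : ℚ) * ((M⁻¹ : GL (Fin n) ℚ) : Matrix (Fin n) (Fin n) ℚ) i j = w i := by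
    have := congrFun hinv i
    simpa [Matrix.mulVec, dotProduct, Pi.single_apply, mul_ite,
      Finset.sum_ite_eq, mul_comm, mul_assoc, mul_left_comm] using this
  have hαq : (α : ℚ) ≠ 0 := Nat.cast_ne_zero.mpr hα
  have : ((M⁻¹ : GL (Fin n) ℚ) : Matrix (Fin n) (Fin n) ℚ) i j
      = ((α : ℚ))⁻¹ * (w i : ℚ) := by
    rw [← hval, inv_mul_cancel_left₀ hαq]
  rw [this]
  exact R.mul_mem hαinv (intCast_mem R (w i))

/-- Let `R = ℤ[1/p : p ∈ P] ⊆ ℚ` for a set `P` of primes.  If `A ∈ GL(n,ℚ)` and there is a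
positive natural number `α` which is a unit of `R` such that
`α ℤⁿ ⊆ ℤⁿ ∩ A ℤⁿ ∩ A⁻¹ ℤⁿ`, then all entries of `A` and of `A⁻¹` lie in `R`. -/
theorem stmt_6 (P : Set ℕ) (hP : ∀ p ∈ P, Nat.Prime p) (n : ℕ)
    (R : Subring ℚ) (hR : R = Subring.closure ((fun p : ℕ => ((p : ℚ))⁻¹) '' P))
    (A : GL (Fin n) ℚ) (α : ℕ) (hα : α ≠ 0)
    (hαR : (α : ℚ) ∈ R) (hαinv : ((α : ℚ))⁻¹ ∈ R)
    (hA : ∀ v : Fin n → ℤ, ∃ w : Fin n → ℤ,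
      (A : Matrix (Fin n) (Fin n) ℚ).mulVec (fun i => (w i : ℚ))
        = fun i => (α : ℚ) * (v i : ℚ))
    (hAinv : ∀ v : Fin n → ℤ, ∃ w : Fin n → ℤ,
      ((A⁻¹ : GL (Fin n) ℚ) : Matrix (Fin n) (Fin n) ℚ).mulVec (fun i => (w i : ℚ))
        = fun i => (α : ℚ) * (v i : ℚ)) :
    (∀ i j, (A : Matrix (Fin n) (Fin n) ℚ) i j ∈ R) ∧
    (∀ i j, ((A⁻¹ : GL (Fin n) ℚ) : Matrix (Fin n) (Fin n) ℚ) i j ∈ R) := by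
  refine ⟨?_, stmt_6_aux n R α hα hαinv A hA⟩
  have := stmt_6_aux n R α hα hαinv A⁻¹ hAinv
  simpa using this
end

section
/- Let n ≥ 2 and let Λ_1, Λ_2 be finite-index subgroups of Γ = ℤ^n ⋊ SL(n,ℤ), and let δ : Λ_1 → Λ_2 be a group isomorphism. Then δ(Λ_1 ∩ ℤ^n) = Λ_2 ∩ ℤ^n, where ℤ^n is identified with the translation normal subgroup of Γ. -/
open Matrix

/-- The action of `SL(n,ℤ)` on `ℤⁿ` (written multiplicatively) by matrix-vector
multiplication. -/
noncomputable def slAct (n : ℕ) :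
    SpecialLinearGroup (Fin n) ℤ →* MulAut (Multiplicative (Fin n → ℤ)) where
  toFun S :=
    { toFun := fun v => Multiplicative.ofAdd ((S : Matrix (Fin n) (Fin n) ℤ).mulVec v.toAdd)
      invFun := fun v =>
        Multiplicative.ofAdd (((S⁻¹ : SpecialLinearGroup (Fin n) ℤ) :
          Matrix (Fin n) (Fin n) ℤ).mulVec v.toAdd)
      left_inv := fun v => by
        simp [Matrix.mulVec_mulVec, Matrix.adjugate_mul, Matrix.mul_adjugate, S.prop]
      right_inv := fun v => by
        simp [Matrix.mulVec_mulVec, Matrix.adjugate_mul, Matrix.mul_adjugate, S.prop]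
      map_mul' := fun v w => by
        simp [Matrix.mulVec_add] }
  map_one' := by
    ext v
    simp
  map_mul' S T := by
    ext v
    simp [Matrix.mulVec_mulVec]

/-- The group `Γ = ℤⁿ ⋊ SL(n,ℤ)`. -/
noncomputable abbrev GammaSL (n : ℕ) :=
  SemidirectProduct (Multiplicative (Fin n → ℤ)) (SpecialLinearGroup (Fin n) ℤ) (slAct n)

/-! An element of `Γ` is a translation iff all its conjugates by a finite-index subgroup `Λ`
commute with it; this property is intrinsic to `Λ`, hence preserved by `δ`. Translations have it
because `ℤⁿ` is normal and abelian. Conversely, let `g = (v, B)` and `N = B - 1`. Every element of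
`Γ` has a nonzero power in `Λ`: conjugating by such powers of translations gives `N² = 0`, and
conjugating by the powers `(1 + E_ij)^{±m}` of elementary transvections gives `N E_ij N = 0`;
together these force `N = 0`. -/

open SemidirectProduct

section ConjugatesCommute

variable {G H : Type*} [Group G] [Group H]

def ConjugatesCommute (g : G) : Prop := ∀ x : G, Commute (x * g * x⁻¹) g

theorem MulEquiv.conjugatesCommute_apply_iff (e : G ≃* H) {g : G} :
    ConjugatesCommute (e g) ↔ ConjugatesCommute g := by
  simp only [ConjugatesCommute, e.surjective.forall, ← map_mul, ← map_inv,
    commute_map_iff e.injective]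

theorem Subgroup.conjugatesCommute_iff {Λ : Subgroup G} {g : Λ} :
    ConjugatesCommute g ↔ ∀ x ∈ Λ, Commute (x * g * x⁻¹) (g : G) := by
  simp only [ConjugatesCommute, ← commute_map_iff Λ.subtype_injective, Subtype.forall]
  rfl

theorem Subgroup.conjugatesCommute_of_mem {A : Subgroup G} [A.Normal] [IsMulCommutative A]
    {g : G} (hg : g ∈ A) : ConjugatesCommute g := fun x =>
  setLike_mul_comm (Subgroup.Normal.conj_mem ‹_› g hg x) hg

end ConjugatesCommute

/-- Modulo `N²` and `E²`, the commutator of `(1 ± E)(1 + N)(1 ∓ E)` with `1 + N` is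
`∓ 2 NEN + (ENEN - NENE)`; the difference of the two is `4 NEN`. -/
theorem mul_mul_eq_zero_of_commute_conj {R : Type*} [Ring R] [Module.IsTorsionFree ℤ R] {N E : R}
    (hN : N * N = 0) (hE : E * E = 0)
    (hpos : Commute ((1 + E) * (1 + N) * (1 - E)) (1 + N))
    (hneg : Commute ((1 - E) * (1 + N) * (1 + E)) (1 + N)) :
    N * E * N = 0 := by
  have hN' : ∀ X, N * (N * X) = 0 := fun X => by rw [← mul_assoc, hN, zero_mul]
  have hpos := sub_eq_zero.mpr hpos.eq
  have hneg := sub_eq_zero.mpr hneg.eq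
  simp only [mul_add, add_mul, mul_sub, sub_mul, mul_one, one_mul, mul_assoc, hN, hE, hN',
    mul_zero, add_zero, sub_zero] at hpos hneg
  have h4 : (4 : ℤ) • (N * (E * N)) = 0 := by
    linear_combination (norm := module) hneg - hpos
  rw [mul_assoc]
  exact (smul_eq_zero.mp h4).resolve_left (by norm_num)

theorem Matrix.mul_single_mul_apply {ι R : Type*} [Fintype ι] [DecidableEq ι] [Semiring R]
    (N : Matrix ι ι R) (i j a b : ι) (c : R) :
    (N * single i j c * N) a b = N a i * c * N j b := by
  simp [Matrix.mul_apply, Matrix.single, ite_and, mul_assoc]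

theorem Matrix.eq_zero_of_mul_self_eq_zero_of_mul_single_mul {ι R : Type*} [Fintype ι]
    [DecidableEq ι] [Ring R] [NoZeroDivisors R] {N : Matrix ι ι R} (hN : N * N = 0)
    (hsingle : ∀ i j, i ≠ j → ∃ c ≠ 0, N * single i j c * N = 0) : N = 0 := by
  have hrank : ∀ i j, i ≠ j → ∀ a b, N a i * N j b = 0 := fun i j hij a b => by
    obtain ⟨c, hc, h⟩ := hsingle i j hij
    have h := congrFun₂ h a b
    rw [mul_single_mul_apply, zero_apply, mul_assoc] at h
    rcases mul_eq_zero.mp h with h | h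
    · exact mul_eq_zero_of_left h _
    · exact mul_eq_zero_of_right _ ((mul_eq_zero.mp h).resolve_left hc)
  by_contra hne
  obtain ⟨p, q, hpq⟩ : ∃ p q, N p q ≠ 0 := by
    by_contra! h
    exact hne (Matrix.ext h)
  have hrow : ∀ j ≠ q, ∀ b, N j b = 0 := fun j hj b =>
    (mul_eq_zero.mp (hrank q j hj.symm p b)).resolve_left hpq
  obtain rfl : p = q := by_contra fun h => hpq (hrow p h q)
  have hpp : (N * N) p p = N p p * N p p := by
    rw [mul_apply, Finset.sum_eq_single p (fun b _ hb => by rw [hrow b hb p, mul_zero])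
      (fun h => absurd (Finset.mem_univ p) h)]
  rw [hN, zero_apply] at hpp
  exact hpq (mul_self_eq_zero.mp hpp.symm)

theorem Matrix.SpecialLinearGroup.transvection_pow {ι F : Type*} [DecidableEq ι] [Fintype ι]
    [CommRing F] {i j : ι} (hij : i ≠ j) (b : F) (m : ℕ) :
    transvection hij b ^ m = transvection hij (m • b) := by
  induction m with
  | zero => simp [transvection_coeff_zero]
  | succ m ih => rw [pow_succ, ih, ← transvection_add, succ_nsmul]

theorem slAct_apply {n : ℕ} (S : SpecialLinearGroup (Fin n) ℤ)
    (u : Multiplicative (Fin n → ℤ)) :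
    slAct n S u = Multiplicative.ofAdd ((S : Matrix (Fin n) (Fin n) ℤ) *ᵥ u.toAdd) := rfl

namespace GammaSL

variable {n : ℕ} {Λ : Subgroup (GammaSL n)} {g : GammaSL n} {N : Matrix (Fin n) (Fin n) ℤ}

/-- Conjugating `g = (v, B)` by the translation `a` gives `(v + (1 - B) a, B)`. -/
theorem mulVec_eq_zero_of_commute_conj_inl (hB : (g.right : Matrix (Fin n) (Fin n) ℤ) = 1 + N)
    {a : Multiplicative (Fin n → ℤ)} (h : Commute (inl a * g * (inl a)⁻¹) g) :
    (N * N) *ᵥ a.toAdd = 0 := by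
  have h := congrArg (fun x => x.left.toAdd) h.eq
  simp only [mul_left, mul_right, inv_left, inv_right, left_inl, right_inl, inv_one, one_mul,
    mul_one, map_one, MulAut.one_apply, slAct_apply, toAdd_mul, toAdd_ofAdd, toAdd_inv,
    mulVec_add, mulVec_neg, hB, add_mulVec, one_mulVec] at h
  simp only [← mulVec_mulVec]
  linear_combination h

theorem mul_self_eq_zero_of_forall_commute_conj (hΛ : Λ.index ≠ 0)
    (hg : ∀ x ∈ Λ, Commute (x * g * x⁻¹) g)
    (hB : (g.right : Matrix (Fin n) (Fin n) ℤ) = 1 + N) :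
    N * N = 0 := by
  refine ext_iff_mulVec.mpr fun w => ?_
  obtain ⟨c, hc, -, hmem⟩ :=
    Subgroup.exists_pow_mem_of_index_ne_zero hΛ (inl (Multiplicative.ofAdd w))
  rw [← map_pow] at hmem
  have h := mulVec_eq_zero_of_commute_conj_inl hB (hg _ hmem)
  rw [toAdd_pow, toAdd_ofAdd, mulVec_smul] at h
  rw [zero_mulVec]
  exact (smul_eq_zero.mp h).resolve_left hc.ne'

theorem mul_single_mul_eq_zero_of_forall_commute_conj (hΛ : Λ.index ≠ 0)
    (hg : ∀ x ∈ Λ, Commute (x * g * x⁻¹) g)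
    (hB : (g.right : Matrix (Fin n) (Fin n) ℤ) = 1 + N)
    (hN : N * N = 0) {i j : Fin n} (hij : i ≠ j) :
    ∃ c ≠ 0, N * single i j c * N = 0 := by
  have hconj : ∀ T, inr T ∈ Λ → Commute ((T : Matrix (Fin n) (Fin n) ℤ) * (1 + N) *
      ((T⁻¹ : SpecialLinearGroup (Fin n) ℤ) : Matrix (Fin n) (Fin n) ℤ)) (1 + N) := by
    intro T hT
    simpa [hB] using ((hg _ hT).map rightHom).map SpecialLinearGroup.coeMonoidHom
  obtain ⟨m, hm, -, hmem⟩ :=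
    Subgroup.exists_pow_mem_of_index_ne_zero hΛ (inr (SpecialLinearGroup.transvection hij 1))
  rw [← map_pow, SpecialLinearGroup.transvection_pow, nsmul_one] at hmem
  have hmem' : inr (SpecialLinearGroup.transvection hij (-m : ℤ)) ∈ Λ := by
    rw [← SpecialLinearGroup.transvection_inv, map_inv]
    exact Λ.inv_mem hmem
  refine ⟨m, by exact_mod_cast hm.ne', mul_mul_eq_zero_of_commute_conj hN
    (single_mul_single_of_ne _ _ _ _ hij.symm _) ?_ ?_⟩
  · simpa [SpecialLinearGroup.transvection_coe, SpecialLinearGroup.transvection_inv, single_neg,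
      sub_eq_add_neg] using hconj _ hmem
  · simpa [SpecialLinearGroup.transvection_coe, SpecialLinearGroup.transvection_inv, single_neg,
      sub_eq_add_neg] using hconj _ hmem'

theorem mem_range_inl_of_forall_commute_conj (hΛ : Λ.index ≠ 0)
    (hg : ∀ x ∈ Λ, Commute (x * g * x⁻¹) g) : g ∈ (inl : _ →* GammaSL n).range := by
  have hB : (g.right : Matrix (Fin n) (Fin n) ℤ) = 1 + (g.right - 1) := (add_sub_cancel _ _).symm
  have hN := mul_self_eq_zero_of_forall_commute_conj hΛ hg hB
  have h := eq_zero_of_mul_self_eq_zero_of_mul_single_mul hN fun _ _ hij =>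
    mul_single_mul_eq_zero_of_forall_commute_conj hΛ hg hB hN hij
  rw [range_inl_eq_ker_rightHom, MonoidHom.mem_ker, rightHom_eq_right]
  exact Subtype.ext (sub_eq_zero.mp h)

theorem coe_mem_range_inl_iff (hΛ : Λ.index ≠ 0) (x : Λ) :
    (x : GammaSL n) ∈ (inl : _ →* GammaSL n).range ↔ ConjugatesCommute x := by
  rw [Subgroup.conjugatesCommute_iff]
  refine ⟨fun hx y _ => ?_, mem_range_inl_of_forall_commute_conj hΛ⟩
  have : (inl : _ →* GammaSL n).range.Normal := by
    rw [range_inl_eq_ker_rightHom]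
    infer_instance
  exact Subgroup.conjugatesCommute_of_mem hx y

end GammaSL

theorem stmt_17_general (n : ℕ) (Λ₁ Λ₂ : Subgroup (GammaSL n))
    (h₁ : Λ₁.index ≠ 0) (h₂ : Λ₂.index ≠ 0) (δ : ↥Λ₁ ≃* ↥Λ₂) :
    Subgroup.map (Λ₂.subtype.comp δ.toMonoidHom)
        ((SemidirectProduct.inl.range).comap Λ₁.subtype)
      = SemidirectProduct.inl.range ⊓ Λ₂ := by
  have hδ :
      ((inl.range).comap Λ₁.subtype).map δ.toMonoidHom = (inl.range).comap Λ₂.subtype := by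
    ext x
    rw [Subgroup.mem_map_equiv, Subgroup.mem_comap, Subgroup.mem_comap, Λ₁.subtype_apply,
      Λ₂.subtype_apply, GammaSL.coe_mem_range_inl_iff h₁, GammaSL.coe_mem_range_inl_iff h₂,
      ← δ.symm.conjugatesCommute_apply_iff]
  rw [← Subgroup.map_map, hδ, Subgroup.map_comap_eq, Λ₂.range_subtype, inf_comm]

/-- For `n ≥ 2` and finite-index subgroups `Λ₁, Λ₂` of `Γ = ℤⁿ ⋊ SL(n,ℤ)`, any group
isomorphism `δ : Λ₁ → Λ₂` maps `Λ₁ ∩ ℤⁿ` onto `Λ₂ ∩ ℤⁿ`, where `ℤⁿ` is the translation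
normal subgroup (the range of the canonical inclusion). -/
theorem stmt_17 (n : ℕ) (hn : 2 ≤ n) (Λ₁ Λ₂ : Subgroup (GammaSL n))
    (h₁ : Λ₁.index ≠ 0) (h₂ : Λ₂.index ≠ 0) (δ : ↥Λ₁ ≃* ↥Λ₂) :
    Subgroup.map (Λ₂.subtype.comp δ.toMonoidHom)
        ((SemidirectProduct.inl.range).comap Λ₁.subtype)
      = SemidirectProduct.inl.range ⊓ Λ₂ :=
  stmt_17_general n Λ₁ Λ₂ h₁ h₂ δ
end
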